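/- Christofides combination bound: let G = (V,E) be a complete graph with edge weights d satisfying the triangle inequality, T a spanning tree, M a perfect matching on the odd-degree vertices of T, T* a minimum spanning tree, M* a minimum-weight perfect matching on those odd-degree vertices, and A the Hamiltonian cycle from shortcutting an Eulerian circuit of T ∪ M. If A* is an optimal TSP tour, then (2/3)·w(A) − w(A*) ≤ (2/3)·(w(T) − w(T*) + w(M) − w(M*)), where w denotes total edge weight. -/

import Mathlib

open Finset

/-- The weight of an (undirected) edge, given a symmetrized distance function. -/
noncomputable def edgeWeight {V : Type*} (d : V → V → ℝ) : Sym2 V → ℝ :=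
  Sym2.lift ⟨fun a b => (d a b + d b a) / 2, fun a b => by ring⟩

/-- Total weight of a finite set of edges. -/
noncomputable def setWeight {V : Type*} (d : V → V → ℝ) (S : Finset (Sym2 V)) : ℝ :=
  ∑ e ∈ S, edgeWeight d e

/-- A spanning tree of the complete graph on `V`, given as its edge set:
non-loop edges, connected, and exactly `|V| - 1` edges. -/
def IsSpanningTree {V : Type*} [Fintype V] (T : Finset (Sym2 V)) : Prop :=
  (∀ e ∈ T, ¬ e.IsDiag) ∧ (SimpleGraph.fromEdgeSet (↑T : Set (Sym2 V))).Connected ∧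
    T.card = Fintype.card V - 1

/-- A perfect matching on the vertex set `U`, given as its edge set: non-loop edges
such that every vertex of `U` lies on exactly one edge, and no other vertex on any. -/
def IsPerfectMatchingOn {V : Type*} [DecidableEq V] (U : Finset V)
    (M : Finset (Sym2 V)) : Prop :=
  (∀ e ∈ M, ¬ e.IsDiag) ∧
    ∀ v : V, (M.filter fun e => v ∈ e).card = if v ∈ U then 1 else 0

/-- The set of vertices of odd degree in an edge set. -/
def oddVerts {V : Type*} [Fintype V] [DecidableEq V] (T : Finset (Sym2 V)) : Finset V :=
  univ.filter fun v => Odd (T.filter fun e => v ∈ e).card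

/-- The weight of the Hamiltonian tour visiting the vertices in the cyclic order `σ`. -/
noncomputable def tourWeight {V : Type*} (d : V → V → ℝ) {n : ℕ} [NeZero n]
    (σ : Fin n ≃ V) : ℝ :=
  ∑ i : Fin n, d (σ i) (σ (i + 1))

/-!
Deleting one edge of the tour `A*` leaves a Hamiltonian path, which is a spanning tree, so
`w(T*) ≤ w(A*)`. The odd-degree vertices of `T` are even in number; listed in the cyclic order
of `A*` as `x₀, …, x_{2k-1}`, they carry the two alternating perfect matchings
`{x₀x₁, x₂x₃, …}` and `{x₁x₂, x₃x₄, …}`, whose weights add up to the shortcut tour through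
the `xᵢ`, hence by the triangle inequality to at most `w(A*)`. So `2 w(M*) ≤ w(A*)`, and
`(2/3) (w(T*) + w(M*)) ≤ w(A*)` combines with `w(A) ≤ w(T) + w(M)` to give the bound.
-/

open Fin.NatCast

lemma edgeWeight_mk {V : Type*} (d : V → V → ℝ) (hdsym : ∀ a b, d a b = d b a) (a b : V) :
    edgeWeight d s(a, b) = d a b := by
  change (d a b + d b a) / 2 = d a b
  rw [hdsym b a]
  ring

lemma even_card_oddVerts {V : Type*} [Fintype V] [DecidableEq V] {T : Finset (Sym2 V)}
    (hT : ∀ e ∈ T, ¬ e.IsDiag) : Even (oddVerts T).card := by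
  classical
  let G := SimpleGraph.fromEdgeSet (T : Set (Sym2 V))
  have hE : G.edgeFinset = T := by
    ext e
    simp only [G, SimpleGraph.mem_edgeFinset, SimpleGraph.edgeSet_fromEdgeSet]
    exact ⟨fun h => h.1, fun h => ⟨h, hT e h⟩⟩
  have hdeg : ∀ v, G.degree v = (T.filter fun e => v ∈ e).card := by
    intro v
    rw [← G.card_incidenceFinset_eq_degree, G.incidenceFinset_eq_filter, hE]
  simpa only [oddVerts, hdeg] using G.even_card_odd_degree_vertices

section Path

variable {V : Type*} {m : ℕ}

lemma injective_pathEdge (σ : Fin (m + 1) ≃ V) :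
    Function.Injective fun i : Fin m => s(σ i.castSucc, σ i.succ) := by
  intro i j hij
  rcases Sym2.eq_iff.mp hij with ⟨h, -⟩ | ⟨h₁, h₂⟩
  · exact Fin.castSucc_injective m (σ.injective h)
  · have h₁ := congrArg Fin.val (σ.injective h₁)
    have h₂ := congrArg Fin.val (σ.injective h₂)
    simp only [Fin.val_castSucc, Fin.val_succ] at h₁ h₂
    omega

variable [DecidableEq V]

def pathEdges (f : Fin (m + 1) → V) : Finset (Sym2 V) :=
  univ.image fun i : Fin m => s(f i.castSucc, f i.succ)

lemma isSpanningTree_pathEdges [Fintype V] (σ : Fin (m + 1) ≃ V)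
    (hm : m + 1 = Fintype.card V) : IsSpanningTree (pathEdges σ) := by
  have hadj (i : Fin m) :
      (SimpleGraph.fromEdgeSet (pathEdges σ : Set (Sym2 V))).Adj (σ i.castSucc) (σ i.succ) := by
    refine ⟨mem_coe.mpr (mem_image_of_mem _ (mem_univ i)), fun h => ?_⟩
    exact i.castSucc_lt_succ.ne (σ.injective h)
  refine ⟨?_, ?_, ?_⟩
  · simp only [pathEdges, mem_image, mem_univ, true_and, forall_exists_index,
      forall_apply_eq_imp_iff, Sym2.mk_isDiag_iff]
    exact fun i h => i.castSucc_lt_succ.ne (σ.injective h)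
  · refine SimpleGraph.connected_iff_exists_forall_reachable _ |>.mpr ⟨σ 0, fun v => ?_⟩
    rw [← σ.apply_symm_apply v]
    induction σ.symm v using Fin.induction with
    | zero => rfl
    | succ i ih => exact ih.trans (hadj i).reachable
  · rw [pathEdges, card_image_of_injective _ (injective_pathEdge σ), card_univ, Fintype.card_fin]
    omega

lemma setWeight_pathEdges_le_tourWeight (d : V → V → ℝ) (hd0 : ∀ a b, 0 ≤ d a b)
    (hdsym : ∀ a b, d a b = d b a) (σ : Fin (m + 1) ≃ V) :
    setWeight d (pathEdges σ) ≤ tourWeight d σ := by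
  rw [setWeight, pathEdges, sum_image fun i _ j _ h => injective_pathEdge σ h, tourWeight,
    Fin.sum_univ_castSucc]
  simp only [edgeWeight_mk d hdsym, Fin.coeSucc_eq_succ]
  exact le_add_of_nonneg_right (hd0 _ _)

end Path

lemma exists_isSpanningTree_setWeight_le_tourWeight {V : Type*} [Fintype V] (d : V → V → ℝ)
    (hd0 : ∀ a b, 0 ≤ d a b) (hdsym : ∀ a b, d a b = d b a) {n : ℕ} [NeZero n]
    (hn : n = Fintype.card V) (σ : Fin n ≃ V) :
    ∃ T : Finset (Sym2 V), IsSpanningTree T ∧ setWeight d T ≤ tourWeight d σ := by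
  classical
  obtain ⟨m, rfl⟩ := Nat.exists_eq_add_one_of_ne_zero (NeZero.ne n)
  exact ⟨pathEdges σ, isSpanningTree_pathEdges σ hn,
    setWeight_pathEdges_le_tourWeight d hd0 hdsym σ⟩

section CycleWeight

variable {V : Type*} (d : V → V → ℝ)

noncomputable def cycleWeight {n : ℕ} [NeZero n] (f : Fin n → V) : ℝ :=
  ∑ i, d (f i) (f (i + 1))

variable {n : ℕ} [NeZero n]

lemma tourWeight_eq_cycleWeight (σ : Fin n ≃ V) : tourWeight d σ = cycleWeight d σ := rfl

lemma cycleWeight_comp_addLeft (f : Fin n → V) (c : Fin n) :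
    cycleWeight d (fun i => f (c + i)) = cycleWeight d f :=
  Fintype.sum_equiv (Equiv.addLeft c) _ _ fun i => by simp [add_assoc]

lemma cycleWeight_eq_sum_Ico (f : Fin n → V) (a : ℕ) :
    cycleWeight d f = ∑ t ∈ Ico a (a + n), d (f t) (f ↑(t + 1)) := by
  rw [sum_Ico_eq_sum_range, Nat.add_sub_cancel_left, ← Fin.sum_univ_eq_sum_range,
    ← cycleWeight_comp_addLeft d f a]
  simp [cycleWeight, add_assoc]

lemma le_sum_Ico_of_triangle (hdtri : ∀ a b c, d a c ≤ d a b + d b c) (g : ℕ → V) {a b : ℕ}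
    (hab : a < b) : d (g a) (g b) ≤ ∑ t ∈ Ico a b, d (g t) (g (t + 1)) := by
  induction b, hab using Nat.le_induction with
  | base => simp
  | succ b hab ih =>
    rw [sum_Ico_succ_top (by omega)]
    linarith [hdtri (g a) (g b) (g (b + 1))]

lemma sum_comp_le_sum_Ico (hdtri : ∀ a b c, d a c ≤ d a b + d b c) (g : ℕ → V) (q : ℕ → ℕ)
    (r : ℕ) (hq : StrictMonoOn q (Set.Iic r)) :
    ∑ j ∈ range r, d (g (q j)) (g (q (j + 1))) ≤ ∑ t ∈ Ico (q 0) (q r), d (g t) (g (t + 1)) := by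
  induction r with
  | zero => simp
  | succ r ih =>
    have hlt : q r < q (r + 1) := hq (by simp) (by simp) (by omega)
    rw [sum_range_succ, ← sum_Ico_consecutive _ (hq.monotoneOn (by simp) (by simp) (by omega))
      hlt.le]
    gcongr
    · exact ih (hq.mono (Set.Iic_subset_Iic.mpr (by omega)))
    · exact le_sum_Ico_of_triangle d hdtri g hlt

lemma cycleWeight_comp_le_of_strictMono (hdtri : ∀ a b c, d a c ≤ d a b + d b c)
    (f : Fin n → V) {m : ℕ} [NeZero m] {p : Fin m → Fin n} (hp : StrictMono p) :
    cycleWeight d (f ∘ p) ≤ cycleWeight d f := by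
  -- The positions of `p` in `ℕ`, with the cycle closed at `p 0 + n`; the arc of `f` from `q j`
  -- to `q (j + 1)` bounds the edge from `f (p j)` to `f (p (j + 1))`.
  let q : ℕ → ℕ := fun j => if h : j < m then p ⟨j, h⟩ else p 0 + n
  have hq_val (j : Fin m) : q j = p j := dif_pos j.isLt
  have hq_zero : q 0 = p 0 := by simpa using hq_val 0
  have hq_last : q m = p 0 + n := dif_neg (lt_irrefl m)
  have hq : StrictMonoOn q (Set.Iic m) := by
    intro i hi j hj hij
    have hi' : i < m := hij.trans_le (Set.mem_Iic.mp hj)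
    rw [show i = ((⟨i, hi'⟩ : Fin m) : ℕ) from rfl, hq_val]
    rcases Nat.lt_or_eq_of_le (Set.mem_Iic.mp hj) with hj | rfl
    · rw [show j = ((⟨j, hj⟩ : Fin m) : ℕ) from rfl, hq_val]
      exact hp (Fin.mk_lt_mk.mpr hij)
    · rw [hq_last]
      omega
  have hq_succ (j : Fin m) : f (q (j + 1) : Fin n) = f (p (j + 1)) := by
    by_cases hj : (j : ℕ) + 1 < m
    · rw [show (j : ℕ) + 1 = ((⟨j + 1, hj⟩ : Fin m) : ℕ) from rfl, hq_val, Fin.cast_val_eq_self]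
      congr 2
      ext
      rw [Fin.val_add_one_of_lt' hj]
    · have hj' : (j : ℕ) + 1 = m := by omega
      have hwrap : j + 1 = 0 := by ext; simp [Fin.val_add, hj']
      rw [hj', hq_last, hwrap, Nat.cast_add, Fin.natCast_self, add_zero, Fin.cast_val_eq_self]
  calc cycleWeight d (f ∘ p)
      = ∑ j ∈ range m, d (f (q j)) (f (q (j + 1))) := by
        rw [← Fin.sum_univ_eq_sum_range (fun j => d (f (q j)) (f (q (j + 1))))]
        refine sum_congr rfl fun j _ => ?_
        rw [hq_val, Fin.cast_val_eq_self, hq_succ]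
        rfl
    _ ≤ ∑ t ∈ Ico (q 0) (q m), d (f t) (f ↑(t + 1)) :=
        sum_comp_le_sum_Ico d hdtri (fun t => f t) q m hq
    _ = cycleWeight d f := by
        rw [hq_last, cycleWeight_eq_sum_Ico d f (q 0), hq_zero]

-- `finProdFinEquiv (j, b) = 2 * j + b`: the cycle's edges split by the parity of their tail.
lemma cycleWeight_eq_sum_pairs {k : ℕ} [NeZero k] (x : Fin (k * 2) → V) :
    cycleWeight d x = ∑ j, d (x (finProdFinEquiv (j, 0))) (x (finProdFinEquiv (j, 1))) +
      ∑ j, d (x (1 + finProdFinEquiv (j, 0))) (x (1 + finProdFinEquiv (j, 1))) := by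
  have hsucc (j : Fin k) : (finProdFinEquiv (j, 0) : Fin (k * 2)) + 1 = finProdFinEquiv (j, 1) := by
    ext
    rw [Fin.val_add_one_of_lt'] <;>
      simp only [finProdFinEquiv_apply_val, Fin.val_zero, Fin.val_one] <;> omega
  rw [cycleWeight, ← finProdFinEquiv.sum_comp, Fintype.sum_prod_type, ← sum_add_distrib]
  refine sum_congr rfl fun j _ => ?_
  rw [Fin.sum_univ_two, hsucc, add_comm 1 (finProdFinEquiv (j, 0)), hsucc, add_comm 1]

end CycleWeight

section Pairing

variable {V : Type*} {ι : Type*}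

lemma injective_pairEdge {y : ι × Fin 2 → V} (hy : Function.Injective y) :
    Function.Injective fun j => s(y (j, 0), y (j, 1)) := by
  intro i j hij
  rcases Sym2.eq_iff.mp hij with ⟨h, -⟩ | ⟨h, -⟩
  · exact congrArg Prod.fst (hy h)
  · simpa using hy h

variable [DecidableEq V] [Fintype ι]

def pairEdges (y : ι × Fin 2 → V) : Finset (Sym2 V) :=
  univ.image fun j => s(y (j, 0), y (j, 1))

variable {y : ι × Fin 2 → V}

lemma pairEdges_isPerfectMatchingOn {U : Finset V} (hy : Function.Injective y)
    (hU : ∀ v, v ∈ U ↔ v ∈ Set.range y) : IsPerfectMatchingOn U (pairEdges y) := by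
  refine ⟨?_, fun v => ?_⟩
  · simp only [pairEdges, mem_image, mem_univ, true_and, forall_exists_index,
      forall_apply_eq_imp_iff, Sym2.mk_isDiag_iff]
    intro j h
    simpa using hy h
  rw [pairEdges, filter_image, card_image_of_injective _ (injective_pairEdge hy)]
  split_ifs with hv
  · obtain ⟨⟨j, b⟩, rfl⟩ := (hU v).mp hv
    rw [card_eq_one]
    refine ⟨j, ?_⟩
    ext i
    simp only [mem_filter, mem_univ, true_and, Sym2.mem_iff, hy.eq_iff, Prod.mk.injEq,
      mem_singleton]
    fin_cases b <;> simp [eq_comm]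
  · rw [card_eq_zero, filter_eq_empty_iff]
    rintro j - hj
    rcases Sym2.mem_iff.mp hj with rfl | rfl <;> exact hv ((hU _).mpr ⟨_, rfl⟩)

lemma setWeight_pairEdges (d : V → V → ℝ) (hdsym : ∀ a b, d a b = d b a)
    (hy : Function.Injective y) : setWeight d (pairEdges y) = ∑ j, d (y (j, 0)) (y (j, 1)) := by
  rw [setWeight, pairEdges, sum_image fun i _ j _ h => injective_pairEdge hy h]
  exact sum_congr rfl fun j _ => edgeWeight_mk d hdsym _ _

end Pairing

lemma isPerfectMatchingOn_empty {V : Type*} [DecidableEq V] :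
    IsPerfectMatchingOn (∅ : Finset V) ∅ :=
  ⟨by simp, by simp⟩

lemma tourWeight_nonneg {V : Type*} (d : V → V → ℝ) (hd0 : ∀ a b, 0 ≤ d a b) {n : ℕ} [NeZero n]
    (σ : Fin n ≃ V) : 0 ≤ tourWeight d σ :=
  sum_nonneg fun _ _ => hd0 _ _

lemma exists_perfectMatchingOn_add_le_tourWeight {V : Type*} [DecidableEq V] (d : V → V → ℝ)
    (hd0 : ∀ a b, 0 ≤ d a b) (hdsym : ∀ a b, d a b = d b a)
    (hdtri : ∀ a b c, d a c ≤ d a b + d b c) {n : ℕ} [NeZero n] (σ : Fin n ≃ V)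
    {U : Finset V} (hU : Even U.card) :
    ∃ M₁ M₂ : Finset (Sym2 V), IsPerfectMatchingOn U M₁ ∧ IsPerfectMatchingOn U M₂ ∧
      setWeight d M₁ + setWeight d M₂ ≤ tourWeight d σ := by
  obtain ⟨k, hk⟩ := hU
  rcases k.eq_zero_or_pos with rfl | hk0
  · rw [card_eq_zero.mp hk]
    refine ⟨∅, ∅, isPerfectMatchingOn_empty, isPerfectMatchingOn_empty, ?_⟩
    simpa [setWeight] using tourWeight_nonneg d hd0 σ
  have : NeZero k := ⟨hk0.ne'⟩
  have hS : (U.map σ.symm.toEmbedding).card = k * 2 := by rw [card_map, hk]; ring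
  let p := (U.map σ.symm.toEmbedding).orderEmbOfFin hS
  let x : Fin (k * 2) → V := σ ∘ p
  have hx : Function.Injective x := σ.injective.comp p.injective
  have hx_range : ∀ v, v ∈ U ↔ v ∈ Set.range x := by
    intro v
    rw [Set.range_comp, range_orderEmbOfFin]
    simp [Equiv.image_eq_preimage_symm]
  have hxe (e : Fin k × Fin 2 ≃ Fin (k * 2)) : Function.Injective (x ∘ e) := hx.comp e.injective
  have hxe_range (e : Fin k × Fin 2 ≃ Fin (k * 2)) : ∀ v, v ∈ U ↔ v ∈ Set.range (x ∘ e) := by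
    simpa only [EquivLike.range_comp] using hx_range
  let e₁ := finProdFinEquiv.trans (Equiv.addLeft (1 : Fin (k * 2)))
  refine ⟨pairEdges (x ∘ finProdFinEquiv), pairEdges (x ∘ e₁),
    pairEdges_isPerfectMatchingOn (hxe _) (hxe_range _),
    pairEdges_isPerfectMatchingOn (hxe _) (hxe_range _), ?_⟩
  rw [setWeight_pairEdges d hdsym (hxe _), setWeight_pairEdges d hdsym (hxe _),
    tourWeight_eq_cycleWeight]
  exact (cycleWeight_eq_sum_pairs d x).symm.trans_le
    (cycleWeight_comp_le_of_strictMono d hdtri σ p.strictMono)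

theorem christofides_combination_bound_general {V : Type*} [Fintype V] [DecidableEq V]
    {n : ℕ} [NeZero n] (hn : n = Fintype.card V)
    (d : V → V → ℝ)
    (hd0 : ∀ a b, 0 ≤ d a b) (hdsym : ∀ a b, d a b = d b a)
    (hdtri : ∀ a b c, d a c ≤ d a b + d b c)
    (T Tstar : Finset (Sym2 V))
    (hT : IsSpanningTree T)
    (hTmin : ∀ T', IsSpanningTree T' → setWeight d Tstar ≤ setWeight d T')
    (M Mstar : Finset (Sym2 V))
    (hMmin : ∀ M', IsPerfectMatchingOn (oddVerts T) M' →
      setWeight d Mstar ≤ setWeight d M')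
    (A Astar : Fin n ≃ V)
    (hshortcut : tourWeight d A ≤ setWeight d T + setWeight d M) :
    (2 / 3) * tourWeight d A - tourWeight d Astar ≤
      (2 / 3) * (setWeight d T - setWeight d Tstar
        + setWeight d M - setWeight d Mstar) := by
  obtain ⟨P, hP, hPw⟩ := exists_isSpanningTree_setWeight_le_tourWeight d hd0 hdsym hn Astar
  obtain ⟨M₁, M₂, hM₁, hM₂, hMw⟩ := exists_perfectMatchingOn_add_le_tourWeight d hd0 hdsym hdtri
    Astar (even_card_oddVerts hT.1)
  linarith [hTmin P hP, hMmin M₁ hM₁, hMmin M₂ hM₂]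

theorem christofides_combination_bound {V : Type*} [Fintype V] [DecidableEq V]
    {n : ℕ} [NeZero n] (hn : n = Fintype.card V) (hn2 : 2 ≤ n)
    (d : V → V → ℝ)
    (hd0 : ∀ a b, 0 ≤ d a b) (hdsym : ∀ a b, d a b = d b a)
    (hdtri : ∀ a b c, d a c ≤ d a b + d b c)
    (T Tstar : Finset (Sym2 V))
    (hT : IsSpanningTree T) (hTstar : IsSpanningTree Tstar)
    (hTmin : ∀ T', IsSpanningTree T' → setWeight d Tstar ≤ setWeight d T')
    (M Mstar : Finset (Sym2 V))
    (hM : IsPerfectMatchingOn (oddVerts T) M)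
    (hMstar : IsPerfectMatchingOn (oddVerts T) Mstar)
    (hMmin : ∀ M', IsPerfectMatchingOn (oddVerts T) M' →
      setWeight d Mstar ≤ setWeight d M')
    (A Astar : Fin n ≃ V)
    (hAstar : ∀ σ : Fin n ≃ V, tourWeight d Astar ≤ tourWeight d σ)
    (hshortcut : tourWeight d A ≤ setWeight d T + setWeight d M) :
    (2 / 3) * tourWeight d A - tourWeight d Astar ≤
      (2 / 3) * (setWeight d T - setWeight d Tstar
        + setWeight d M - setWeight d Mstar) :=
  christofides_combination_bound_general hn d hd0 hdsym hdtri T Tstar hT hTmin M Mstar hMmin A Astar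
    hshortcut
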